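/- If τ > 0 satisfies the CFL condition, then for each σ = 1, 2, 3 the matrix I + (τ/2)M_σ is nonsingular and all of its entries are nonnegative. -/

import Mathlib

open Matrix
open scoped Kronecker

noncomputable section

namespace Kawarada

/-- The spectral norm (largest singular value) of a real matrix:
the operator norm of the induced map between Euclidean spaces. -/
noncomputable def specNorm {m : Type*} [Fintype m] [DecidableEq m]
    (A : Matrix m m ℝ) : ℝ :=
  ‖LinearMap.toContinuousLinearMap (Matrix.toEuclideanLin A)‖

/-- The `N × N` tridiagonal matrix `T` built from mesh steps `h 0, …, h N`.
Lean row/column index `i : Fin N` corresponds to the paper's index `i + 1`. -/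
noncomputable def tridiag (N : ℕ) (h : ℕ → ℝ) : Matrix (Fin N) (Fin N) ℝ :=
  Matrix.of fun i p =>
    if (i : ℕ) = (p : ℕ) then -2 / (h i * h ((i : ℕ) + 1))
    else if (i : ℕ) = (p : ℕ) + 1 then 2 / (h i * (h i + h ((i : ℕ) + 1)))
    else if (p : ℕ) = (i : ℕ) + 1 then 2 / (h ((i : ℕ) + 1) * (h i + h ((i : ℕ) + 1)))
    else 0

/-- `φ_{i,j,k}` for the paper's indices `i,j,k ≥ 1`. -/
noncomputable def phi (a b c q : ℝ) (h1 h2 h3 : ℕ → ℝ) (i j k : ℕ) : ℝ :=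
  (a ^ 2 * (∑ ℓ ∈ Finset.range i, h1 ℓ) ^ 2 +
      b ^ 2 * (∑ ℓ ∈ Finset.range j, h2 ℓ) ^ 2 +
      c ^ 2 * (∑ ℓ ∈ Finset.range k, h3 ℓ) ^ 2) ^ (q / 2)

/-- Index type for the vectorization: `i` (the `Fin N1` component) varies fastest. -/
abbrev Idx (N1 N2 N3 : ℕ) := Fin N3 × Fin N2 × Fin N1

/-- `φ` as a function of the vectorized index. -/
noncomputable def phiVec (N1 N2 N3 : ℕ) (a b c q : ℝ) (h1 h2 h3 : ℕ → ℝ)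
    (p : Idx N1 N2 N3) : ℝ :=
  phi a b c q h1 h2 h3 ((p.2.2 : ℕ) + 1) ((p.2.1 : ℕ) + 1) ((p.1 : ℕ) + 1)

/-- The diagonal matrix `B` with entries `φ_{i,j,k}⁻¹`. -/
noncomputable def Bdiag (N1 N2 N3 : ℕ) (a b c q : ℝ) (h1 h2 h3 : ℕ → ℝ) :
    Matrix (Idx N1 N2 N3) (Idx N1 N2 N3) ℝ :=
  Matrix.diagonal fun p => (phiVec N1 N2 N3 a b c q h1 h2 h3 p)⁻¹

/-- The matrices `M1, M2, M3`. -/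
noncomputable def Mmat (N1 N2 N3 : ℕ) (a b c q : ℝ) (h1 h2 h3 : ℕ → ℝ) :
    Fin 3 → Matrix (Idx N1 N2 N3) (Idx N1 N2 N3) ℝ :=
  ![(a ^ 2)⁻¹ •
      (Bdiag N1 N2 N3 a b c q h1 h2 h3 *
        ((1 : Matrix (Fin N3) (Fin N3) ℝ) ⊗ₖ
          ((1 : Matrix (Fin N2) (Fin N2) ℝ) ⊗ₖ tridiag N1 h1))),
    (b ^ 2)⁻¹ •
      (Bdiag N1 N2 N3 a b c q h1 h2 h3 *
        ((1 : Matrix (Fin N3) (Fin N3) ℝ) ⊗ₖ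
          (tridiag N2 h2 ⊗ₖ (1 : Matrix (Fin N1) (Fin N1) ℝ)))),
    (c ^ 2)⁻¹ •
      (Bdiag N1 N2 N3 a b c q h1 h2 h3 *
        (tridiag N3 h3 ⊗ₖ
          ((1 : Matrix (Fin N2) (Fin N2) ℝ) ⊗ₖ (1 : Matrix (Fin N1) (Fin N1) ℝ))))]

/-- The minimum of the mesh steps `h σ j`, `j = 0, …, N`, in one direction. -/
noncomputable def dirMin (N : ℕ) (h : ℕ → ℝ) : ℝ :=
  (Finset.range (N + 1)).inf' Finset.nonempty_range_add_one h

/-- The maximum of the mesh steps in one direction. -/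
noncomputable def dirMax (N : ℕ) (h : ℕ → ℝ) : ℝ :=
  (Finset.range (N + 1)).sup' Finset.nonempty_range_add_one h

/-- `h = min{h_{σ,j}}`, the global minimal mesh step. -/
noncomputable def meshMin (N1 N2 N3 : ℕ) (h1 h2 h3 : ℕ → ℝ) : ℝ :=
  min (dirMin N1 h1) (min (dirMin N2 h2) (dirMin N3 h3))

/-- `H = max{h_{σ,j}}`, the global maximal mesh step. -/
noncomputable def meshMax (N1 N2 N3 : ℕ) (h1 h2 h3 : ℕ → ℝ) : ℝ :=
  max (dirMax N1 h1) (max (dirMax N2 h2) (dirMax N3 h3))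

/-- `β_min = (h²/2)(a² h_{1,0}² + b² h_{2,0}² + c² h_{3,0}²)^{q/2}`. -/
noncomputable def betaMin (N1 N2 N3 : ℕ) (a b c q : ℝ) (h1 h2 h3 : ℕ → ℝ) : ℝ :=
  meshMin N1 N2 N3 h1 h2 h3 ^ 2 / 2 *
    (a ^ 2 * h1 0 ^ 2 + b ^ 2 * h2 0 ^ 2 + c ^ 2 * h3 0 ^ 2) ^ (q / 2)

/-- The CFL condition `τ/β_min < min{a², b², c²}`. -/
def CFL (N1 N2 N3 : ℕ) (a b c q : ℝ) (h1 h2 h3 : ℕ → ℝ) (τ : ℝ) : Prop :=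
  τ / betaMin N1 N2 N3 a b c q h1 h2 h3 < min (a ^ 2) (min (b ^ 2) (c ^ 2))

/-- `φ_min = min φ_{i,j,k}` (for the grid-sizes `nσ + 2 ≥ 2`). -/
noncomputable def phiMin (n1 n2 n3 : ℕ) (a b c q : ℝ) (h1 h2 h3 : ℕ → ℝ) : ℝ :=
  Finset.univ.inf' Finset.univ_nonempty
    (phiVec (n1 + 2) (n2 + 2) (n3 + 2) a b c q h1 h2 h3)

/-- The nonlinear source term `g`, acting componentwise: `g(v)_p = f(v_p)/φ_p`. -/
noncomputable def gvec (N1 N2 N3 : ℕ) (a b c q : ℝ) (h1 h2 h3 : ℕ → ℝ) (f : ℝ → ℝ)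
    (v : Idx N1 N2 N3 → ℝ) : Idx N1 N2 N3 → ℝ :=
  fun p => f (v p) / phiVec N1 N2 N3 a b c q h1 h2 h3 p

/-- The LOD propagator
`Φ(τ) = ∏_{σ=1}^3 (I − (τ/2)M_σ)⁻¹ (I + (τ/2)M_σ)`. -/
noncomputable def Phi (N1 N2 N3 : ℕ) (a b c q : ℝ) (h1 h2 h3 : ℕ → ℝ) (τ : ℝ) :
    Matrix (Idx N1 N2 N3) (Idx N1 N2 N3) ℝ :=
  (1 - (τ / 2) • Mmat N1 N2 N3 a b c q h1 h2 h3 0)⁻¹ *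
    (1 + (τ / 2) • Mmat N1 N2 N3 a b c q h1 h2 h3 0) *
  ((1 - (τ / 2) • Mmat N1 N2 N3 a b c q h1 h2 h3 1)⁻¹ *
    (1 + (τ / 2) • Mmat N1 N2 N3 a b c q h1 h2 h3 1)) *
  ((1 - (τ / 2) • Mmat N1 N2 N3 a b c q h1 h2 h3 2)⁻¹ *
    (1 + (τ / 2) • Mmat N1 N2 N3 a b c q h1 h2 h3 2))

theorem isHermitian_symPart {m : Type*} [Fintype m] (A : Matrix m m ℝ) :
    (((2 : ℝ)⁻¹ • (A + Aᵀ))).IsHermitian := by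
  show _ᴴ = _
  ext i j
  simp [Matrix.conjTranspose_apply, Matrix.transpose_apply, Matrix.add_apply]
  ring

/-- The logarithmic norm associated with the spectral norm:
`μ(A) = λ_max((A + Aᵀ)/2)`. -/
noncomputable def logNorm {m : Type*} [Fintype m] [DecidableEq m]
    (A : Matrix m m ℝ) : ℝ :=
  ⨆ i, (isHermitian_symPart A).eigenvalues i

/-- The Euclidean (`ℓ²`) norm of a vector. -/
noncomputable def vecNorm {m : Type*} [Fintype m] (x : m → ℝ) : ℝ :=
  Real.sqrt (∑ i, x i ^ 2)

/-! Each `M_σ` is a nonnegative diagonal scaling of `T_σ` tensored with identities, and `T_σ`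
has nonnegative off-diagonal entries and nonpositive row sums (its three nonzero entries in a
row sum to `0`). Both properties pass to `A = (τ/2) M_σ`. The diagonal of `A` is bounded below
by `-τ / (s² φ_{1,1,1} h²) = -τ / (2 s² β_min)`, with `s = a, b, c` for `σ = 1, 2, 3`, which the
CFL condition makes larger than `-1/2`. So `I + A` is entrywise nonnegative, and its diagonal
`1 + A_pp` exceeds `-A_pp ≥ ∑_{r ≠ p} A_pr`; strict diagonal dominance makes it nonsingular. -/

end Kawarada

namespace Matrix

section Subintensity

variable {m n : Type*}

theorem one_add_apply_nonneg [DecidableEq m] {A : Matrix m m ℝ}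
    (hoff : ∀ i j, i ≠ j → 0 ≤ A i j) (hdiag : ∀ i, -1 ≤ A i i) (i j : m) :
    0 ≤ (1 + A) i j := by
  rcases eq_or_ne i j with rfl | hij
  · rw [Matrix.add_apply, one_apply_eq]; linarith [hdiag i]
  · rw [Matrix.add_apply, one_apply_ne hij, zero_add]; exact hoff i j hij

variable [Fintype m]

structure IsSubintensity (A : Matrix m m ℝ) : Prop where
  offDiag_nonneg : ∀ i j, i ≠ j → 0 ≤ A i j
  rowSum_nonpos : ∀ i, ∑ j, A i j ≤ 0

namespace IsSubintensity

variable {A : Matrix m m ℝ}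

theorem one_kronecker [Fintype n] [DecidableEq n] (hA : IsSubintensity A) :
    IsSubintensity ((1 : Matrix n n ℝ) ⊗ₖ A) where
  offDiag_nonneg p r hpr := by
    rw [kroneckerMap_apply, one_apply]
    split_ifs with h
    · simpa using hA.offDiag_nonneg _ _ fun h' => hpr (Prod.ext h h')
    · simp
  rowSum_nonpos p := by
    simpa [Fintype.sum_prod_type, kroneckerMap_apply, one_apply, ite_mul] using
      hA.rowSum_nonpos p.2

theorem kronecker_one [Fintype n] [DecidableEq n] (hA : IsSubintensity A) :
    IsSubintensity (A ⊗ₖ (1 : Matrix n n ℝ)) where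
  offDiag_nonneg p r hpr := by
    rw [kroneckerMap_apply, one_apply]
    split_ifs with h
    · simpa using hA.offDiag_nonneg _ _ fun h' => hpr (Prod.ext h' h)
    · simp
  rowSum_nonpos p := by
    simpa [Fintype.sum_prod_type, kroneckerMap_apply, one_apply, mul_ite] using
      hA.rowSum_nonpos p.1

variable [DecidableEq m]

theorem smul_diagonal_mul (hA : IsSubintensity A) {c : ℝ} (hc : 0 ≤ c) {d : m → ℝ}
    (hd : ∀ i, 0 ≤ d i) : IsSubintensity (c • (diagonal d * A)) where
  offDiag_nonneg i j hij := by
    simpa [diagonal_mul] using mul_nonneg hc (mul_nonneg (hd i) (hA.offDiag_nonneg i j hij))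
  rowSum_nonpos i := by
    simpa [diagonal_mul, ← Finset.mul_sum] using
      mul_nonpos_of_nonneg_of_nonpos hc
        (mul_nonpos_of_nonneg_of_nonpos (hd i) (hA.rowSum_nonpos i))

theorem sum_erase_le (hA : IsSubintensity A) (i : m) :
    ∑ j ∈ Finset.univ.erase i, A i j ≤ -A i i := by
  rw [Finset.sum_erase_eq_sub (Finset.mem_univ i)]
  linarith [hA.rowSum_nonpos i]

theorem apply_self_nonpos (hA : IsSubintensity A) (i : m) : A i i ≤ 0 := by
  have := Finset.sum_nonneg fun j (hj : j ∈ Finset.univ.erase i) =>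
    hA.offDiag_nonneg i j (Finset.ne_of_mem_erase hj).symm
  linarith [hA.sum_erase_le i]

theorem isUnit_one_add (hA : IsSubintensity A) (hdiag : ∀ i, -(1 / 2) < A i i) :
    IsUnit (1 + A) := by
  rw [isUnit_iff_isUnit_det, isUnit_iff_ne_zero]
  refine det_ne_zero_of_sum_row_lt_diag fun i => ?_
  have hoff : ∑ j ∈ Finset.univ.erase i, ‖(1 + A) i j‖ = ∑ j ∈ Finset.univ.erase i, A i j :=
    Finset.sum_congr rfl fun j hj => by
      have hji := Finset.ne_of_mem_erase hj
      rw [Matrix.add_apply, one_apply_ne hji.symm, zero_add,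
        Real.norm_of_nonneg (hA.offDiag_nonneg i j hji.symm)]
  rw [hoff, Matrix.add_apply, one_apply_eq, Real.norm_of_nonneg (by linarith [hdiag i])]
  linarith [hA.sum_erase_le i, hdiag i]


theorem one_add_smul_diagonal_mul (hA : IsSubintensity A) {c δ κ : ℝ} (hc : 0 ≤ c) {d : m → ℝ}
    (hd : ∀ i, 0 ≤ d i) (hdδ : ∀ i, d i ≤ δ) (hAκ : ∀ i, -κ ≤ A i i)
    (hlt : c * (δ * κ) < 1 / 2) :
    IsUnit (1 + c • (diagonal d * A)) ∧ ∀ i j, 0 ≤ (1 + c • (diagonal d * A)) i j := by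
  have hdiag : ∀ i, -(1 / 2) < (c • (diagonal d * A)) i i := fun i => by
    have hdA : δ * -κ ≤ d i * A i i := calc
      δ * -κ ≤ δ * A i i := mul_le_mul_of_nonneg_left (hAκ i) ((hd i).trans (hdδ i))
      _ ≤ d i * A i i := mul_le_mul_of_nonpos_right (hdδ i) (hA.apply_self_nonpos i)
    rw [Matrix.smul_apply, diagonal_mul, smul_eq_mul]
    nlinarith [mul_le_mul_of_nonneg_left hdA hc]
  have hB := hA.smul_diagonal_mul hc hd
  exact ⟨hB.isUnit_one_add hdiag,
    one_add_apply_nonneg hB.offDiag_nonneg fun i => by linarith [hdiag i]⟩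

end IsSubintensity

end Subintensity

end Matrix

theorem Finset.sum_ite_le_of_subsingleton {ι : Type*} (s : Finset ι) {P : ι → Prop}
    [DecidablePred P] (hP : ∀ x y, P x → P y → x = y) {v : ℝ} (hv : 0 ≤ v) :
    ∑ x ∈ s, (if P x then v else 0) ≤ v := by
  rw [← Finset.sum_filter, Finset.sum_const, nsmul_eq_mul]
  refine mul_le_of_le_one_left hv ?_
  exact_mod_cast Finset.card_le_one.2 fun x hx y hy =>
    hP x y (Finset.mem_filter.1 hx).2 (Finset.mem_filter.1 hy).2

namespace Kawarada

section Tridiag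

variable {N : ℕ} {h : ℕ → ℝ}

theorem tridiag_isSubintensity (hpos : ∀ j ≤ N, 0 < h j) : IsSubintensity (tridiag N h) where
  offDiag_nonneg i p hip := by
    have hi := hpos i i.2.le
    have hi' := hpos (i + 1) i.2
    have hip' : (i : ℕ) ≠ p := Fin.val_ne_of_ne hip
    simp only [tridiag, of_apply]
    split_ifs <;> first | omega | positivity
  rowSum_nonpos i := by
    simp only [tridiag, of_apply]
    have hi := hpos i i.2.le
    have hi' := hpos (i + 1) i.2
    set x := h i
    set y := h (i + 1)
    have hsplit : ∀ p : ℕ, (if (i : ℕ) = p then -2 / (x * y)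
        else if (i : ℕ) = p + 1 then 2 / (x * (x + y))
        else if p = i + 1 then 2 / (y * (x + y)) else 0) =
        (if (i : ℕ) = p then -2 / (x * y) else 0) + (if (i : ℕ) = p + 1 then 2 / (x * (x + y))
          else 0) + (if p = i + 1 then 2 / (y * (x + y)) else 0) := fun p => by
      split_ifs <;> first | omega | ring
    -- A boundary row misses a positive neighbour, so its sum is at most `d + l + u = 0`.
    have hl := Finset.sum_ite_le_of_subsingleton Finset.univ
      (P := fun p : Fin N => (i : ℕ) = p + 1) (fun _ _ _ _ => Fin.ext (by omega))
      (v := 2 / (x * (x + y))) (by positivity)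
    have hu := Finset.sum_ite_le_of_subsingleton Finset.univ
      (P := fun p : Fin N => (p : ℕ) = i + 1) (fun _ _ _ _ => Fin.ext (by omega))
      (v := 2 / (y * (x + y))) (by positivity)
    have hdlu : -2 / (x * y) + 2 / (x * (x + y)) + 2 / (y * (x + y)) = 0 := by
      field_simp; ring
    rw [Finset.sum_congr rfl fun (p : Fin N) _ => hsplit p, Finset.sum_add_distrib,
      Finset.sum_add_distrib]
    simp only [Fin.val_inj, Finset.sum_ite_eq, Finset.mem_univ, if_true]
    linarith

theorem tridiag_apply_self_ge {μ : ℝ} (hμ : 0 < μ) (hle : ∀ j ≤ N, μ ≤ h j) (i : Fin N) :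
    -(2 / μ ^ 2) ≤ tridiag N h i i := by
  have hi := hle i i.2.le
  have hi' := hle (i + 1) i.2
  simp only [tridiag, of_apply, if_true, neg_div]
  rw [neg_le_neg_iff, sq]
  gcongr
  exact hμ.le.trans hi

end Tridiag

section Mesh

variable {N N1 N2 N3 : ℕ} {h h1 h2 h3 : ℕ → ℝ} {j : ℕ}

theorem dirMin_le (hj : j ≤ N) : dirMin N h ≤ h j :=
  Finset.inf'_le _ (Finset.mem_range.2 (Nat.lt_succ_of_le hj))

theorem dirMin_pos (hpos : ∀ j ≤ N, 0 < h j) : 0 < dirMin N h :=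
  (Finset.lt_inf'_iff _).2 fun j hj => hpos j (Nat.lt_succ_iff.1 (Finset.mem_range.1 hj))

theorem meshMin_pos (hpos1 : ∀ j ≤ N1, 0 < h1 j) (hpos2 : ∀ j ≤ N2, 0 < h2 j)
    (hpos3 : ∀ j ≤ N3, 0 < h3 j) : 0 < meshMin N1 N2 N3 h1 h2 h3 :=
  lt_min (dirMin_pos hpos1) (lt_min (dirMin_pos hpos2) (dirMin_pos hpos3))

theorem meshMin_le₁ (hj : j ≤ N1) : meshMin N1 N2 N3 h1 h2 h3 ≤ h1 j :=
  (min_le_left _ _).trans (dirMin_le hj)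

theorem meshMin_le₂ (hj : j ≤ N2) : meshMin N1 N2 N3 h1 h2 h3 ≤ h2 j :=
  ((min_le_right _ _).trans (min_le_left _ _)).trans (dirMin_le hj)

theorem meshMin_le₃ (hj : j ≤ N3) : meshMin N1 N2 N3 h1 h2 h3 ≤ h3 j :=
  ((min_le_right _ _).trans (min_le_right _ _)).trans (dirMin_le hj)

theorem sq_apply_zero_le_sq_sum (hpos : ∀ j ≤ N, 0 < h j) (i : Fin N) :
    h 0 ^ 2 ≤ (∑ ℓ ∈ Finset.range (i + 1), h ℓ) ^ 2 := by
  refine pow_le_pow_left₀ (hpos 0 (Nat.zero_le _)).le ?_ 2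
  refine Finset.single_le_sum (fun ℓ hℓ => (hpos ℓ ?_).le) (Finset.mem_range.2 i.succ_pos)
  have := Finset.mem_range.1 hℓ
  omega

theorem le_phiVec {a b c q : ℝ} (hq : 0 ≤ q) (hpos1 : ∀ j ≤ N1, 0 < h1 j)
    (hpos2 : ∀ j ≤ N2, 0 < h2 j) (hpos3 : ∀ j ≤ N3, 0 < h3 j) (p : Idx N1 N2 N3) :
    (a ^ 2 * h1 0 ^ 2 + b ^ 2 * h2 0 ^ 2 + c ^ 2 * h3 0 ^ 2) ^ (q / 2) ≤
      phiVec N1 N2 N3 a b c q h1 h2 h3 p := by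
  unfold phiVec phi
  have := sq_apply_zero_le_sq_sum hpos1 p.2.2
  have := sq_apply_zero_le_sq_sum hpos2 p.2.1
  have := sq_apply_zero_le_sq_sum hpos3 p.1
  gcongr

theorem CFL.min_sq_pos {a b c q τ : ℝ} (hτ : 0 ≤ τ)
    (hCFL : CFL N1 N2 N3 a b c q h1 h2 h3 τ) : 0 < min (a ^ 2) (min (b ^ 2) (c ^ 2)) :=
  (div_nonneg hτ (by unfold betaMin; positivity)).trans_lt hCFL

end Mesh

theorem cfl_diag_coeff_lt_half {τ s μ φ : ℝ} (hμ : 0 < μ) (hφ : 0 < φ) (hs : 0 < s)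
    (h : τ / (μ ^ 2 / 2 * φ) < s) : τ / 2 * s⁻¹ * (φ⁻¹ * (2 / μ ^ 2)) < 1 / 2 := by
  calc τ / 2 * s⁻¹ * (φ⁻¹ * (2 / μ ^ 2)) = τ / (μ ^ 2 / 2 * φ) / s / 2 := by field_simp
    _ < s / s / 2 := by gcongr
    _ = 1 / 2 := by rw [div_self hs.ne']

theorem statement2_general (n1 n2 n3 : ℕ) (a b c q : ℝ)
    (hq0 : 0 ≤ q)
    (h1 h2 h3 : ℕ → ℝ)
    (hpos1 : ∀ j ≤ n1 + 2, 0 < h1 j)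
    (hpos2 : ∀ j ≤ n2 + 2, 0 < h2 j)
    (hpos3 : ∀ j ≤ n3 + 2, 0 < h3 j)
    (τ : ℝ) (hτ : 0 < τ) (hCFL : CFL (n1 + 2) (n2 + 2) (n3 + 2) a b c q h1 h2 h3 τ) :
    ∀ σ : Fin 3,
      IsUnit (1 + (τ / 2) • Mmat (n1 + 2) (n2 + 2) (n3 + 2) a b c q h1 h2 h3 σ) ∧
      ∀ p r, 0 ≤ (1 + (τ / 2) • Mmat (n1 + 2) (n2 + 2) (n3 + 2) a b c q h1 h2 h3 σ) p r := by
  set μ := meshMin (n1 + 2) (n2 + 2) (n3 + 2) h1 h2 h3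
  set φ₀ := (a ^ 2 * h1 0 ^ 2 + b ^ 2 * h2 0 ^ 2 + c ^ 2 * h3 0 ^ 2) ^ (q / 2)
  have hμ : 0 < μ := meshMin_pos hpos1 hpos2 hpos3
  have hsq := hCFL.min_sq_pos hτ.le
  have hφ₀ : 0 < φ₀ := by
    have ha : 0 < a ^ 2 * h1 0 ^ 2 :=
      mul_pos (hsq.trans_le (min_le_left _ _)) (pow_pos (hpos1 0 (Nat.zero_le _)) 2)
    exact Real.rpow_pos_of_pos (by positivity) _
  have hφ := le_phiVec (a := a) (b := b) (c := c) hq0 hpos1 hpos2 hpos3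
  have hdir : ∀ σ, ∃ s K, Mmat (n1 + 2) (n2 + 2) (n3 + 2) a b c q h1 h2 h3 σ =
      s⁻¹ • (Bdiag (n1 + 2) (n2 + 2) (n3 + 2) a b c q h1 h2 h3 * K) ∧
      min (a ^ 2) (min (b ^ 2) (c ^ 2)) ≤ s ∧ IsSubintensity K ∧ ∀ p, -(2 / μ ^ 2) ≤ K p p := by
    intro σ
    fin_cases σ
    · exact ⟨a ^ 2, _, rfl, min_le_left _ _,
        (tridiag_isSubintensity hpos1).one_kronecker.one_kronecker, fun p => by
          simpa [kroneckerMap_apply] using tridiag_apply_self_ge hμ (fun j => meshMin_le₁) p.2.2⟩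
    · exact ⟨b ^ 2, _, rfl, (min_le_right _ _).trans (min_le_left _ _),
        (tridiag_isSubintensity hpos2).kronecker_one.one_kronecker, fun p => by
          simpa [kroneckerMap_apply] using tridiag_apply_self_ge hμ (fun j => meshMin_le₂) p.2.1⟩
    · refine ⟨c ^ 2, _, rfl, (min_le_right _ _).trans (min_le_right _ _), ?_, fun p => by
          simpa [kroneckerMap_apply] using tridiag_apply_self_ge hμ (fun j => meshMin_le₃) p.1⟩
      rw [one_kronecker_one]
      exact (tridiag_isSubintensity hpos3).kronecker_one
  intro σ
  obtain ⟨s, K, hM, hs, hK, hKdiag⟩ := hdir σ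
  have hs₀ : 0 < s := hsq.trans_le hs
  rw [hM, smul_smul]
  exact hK.one_add_smul_diagonal_mul (by positivity)
    (fun p => inv_nonneg.2 (hφ₀.trans_le (hφ p)).le) (fun p => inv_anti₀ hφ₀ (hφ p)) hKdiag
    (cfl_diag_coeff_lt_half hμ hφ₀ hs₀ (hCFL.trans_le hs))

/-- under the CFL condition, `I + (τ/2)M_σ` is nonsingular and
entrywise nonnegative, for `σ = 1,2,3`. -/
theorem statement2 (n1 n2 n3 : ℕ) (a b c q : ℝ)
    (ha : 0 < a) (hb : 0 < b) (hc : 0 < c) (hq0 : 0 ≤ q) (hq2 : q ≤ 2)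
    (h1 h2 h3 : ℕ → ℝ)
    (hpos1 : ∀ j ≤ n1 + 2, 0 < h1 j)
    (hpos2 : ∀ j ≤ n2 + 2, 0 < h2 j)
    (hpos3 : ∀ j ≤ n3 + 2, 0 < h3 j)
    (τ : ℝ) (hτ : 0 < τ) (hCFL : CFL (n1 + 2) (n2 + 2) (n3 + 2) a b c q h1 h2 h3 τ) :
    ∀ σ : Fin 3,
      IsUnit (1 + (τ / 2) • Mmat (n1 + 2) (n2 + 2) (n3 + 2) a b c q h1 h2 h3 σ) ∧
      ∀ p r, 0 ≤ (1 + (τ / 2) • Mmat (n1 + 2) (n2 + 2) (n3 + 2) a b c q h1 h2 h3 σ) p r :=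
  statement2_general n1 n2 n3 a b c q hq0 h1 h2 h3 hpos1 hpos2 hpos3 τ hτ hCFL

end Kawarada
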